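/- Let f ∈ L²(X,μ) on a doubling metric measure space and for ε > 0 let f_ε := Σ_i f_{B_i^ε} φ_i^ε be the discrete convolution with respect to an ε-covering with Lipschitz partition of unity. Then ∫_X |f_ε − f|² dμ ≤ C ∫_X ( ⨍_{B(x,6ε)} |f(x) − f(y)| dμ(y) )² dμ(x), and consequently f_ε → f in L²(X,μ) as ε → 0⁺. -/

import Mathlib

/-
The partition of unity makes `f_ε x - f x` a convex combination of the differences
`f_{B_i^ε} - f x` over those `i` with `x ∈ B(x_i, 2ε)`. Each of them is at most the average of
`|f x - f y|` over `B_i^ε ⊆ B(x, 6ε)`, and since `B(x, 6ε) ⊆ B(x_i, 8ε)`, doubling bounds this by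
`CD³` times the average over `B(x, 6ε)`; squaring and integrating gives the estimate with `C = CD⁶`.

The convergence is proved by density, without the Lebesgue differentiation theorem or the maximal
function. The local oscillation `w ↦ (x ↦ ⨍_{B(x,r)} |w x - w y|)` is sublinear and bounded on `L²`
uniformly in `r`: it is dominated by `|w|` plus the ball average of `|w|`, and by Cauchy–Schwarz,
Fubini and doubling the ball average has `L²` norm at most `√CD ‖w‖₂`. For continuous bounded
functions with bounded support the oscillation tends to `0` in `L²` by dominated convergence, and
these functions are dense in `L²`.
-/

open MeasureTheory Metric Filter Topology Function Set
open scoped ENNReal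

lemma ENNReal.add_sq_le_two_mul (a b : ℝ≥0∞) : (a + b) ^ 2 ≤ 2 * (a ^ 2 + b ^ 2) := by
  have := ENNReal.rpow_add_le_mul_rpow_add_rpow a b one_le_two
  norm_num [ENNReal.rpow_two] at this
  exact this

lemma ENNReal.two_mul_add_quarters (δ : ℝ≥0∞) : 2 * (δ / 4 + δ / 4) = δ := by
  rw [← two_mul, ← mul_assoc, show (2 : ℝ≥0∞) * 2 = 4 by norm_num,
    ENNReal.mul_div_cancel (by norm_num) (by norm_num)]

lemma abs_tsum_mul_sub_le {ι : Type*} {a φ : ι → ℝ} {b M : ℝ} (hφ : ∀ i, 0 ≤ φ i)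
    (hsum : ∑' i, φ i = 1) (h : ∀ i, φ i ≠ 0 → |a i - b| ≤ M) :
    |∑' i, a i * φ i - b| ≤ M := by
  have hφs : Summable φ := by
    by_contra hns
    rw [tsum_eq_zero_of_not_summable hns] at hsum
    exact zero_ne_one hsum
  have hbound (i : ι) : ‖(a i - b) * φ i‖ ≤ M * φ i := by
    rcases eq_or_ne (φ i) 0 with h0 | h0
    · simp [h0]
    · rw [Real.norm_eq_abs, abs_mul, abs_of_nonneg (hφ i)]
      exact mul_le_mul_of_nonneg_right (h i h0) (hφ i)
  have hs : Summable fun i => (a i - b) * φ i :=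
    Summable.of_norm_bounded (hφs.mul_left M) hbound
  have hsplit : ∑' i, a i * φ i - b = ∑' i, (a i - b) * φ i := by
    have ha : Summable fun i => a i * φ i := by
      simpa [sub_mul] using hs.add (hφs.mul_left b)
    simp only [sub_mul]
    rw [ha.tsum_sub (hφs.mul_left b), tsum_mul_left, hsum, mul_one]
  rw [hsplit]
  simpa [hsum] using tsum_of_norm_bounded (hφs.hasSum.mul_left M) hbound

section MeasureSpace

variable {α : Type*} [MeasurableSpace α] {μ : Measure α}

lemma lintegral_sq_le_of_le_add {g a b : α → ℝ≥0∞} (ha : AEMeasurable a μ)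
    (h : ∀ x, g x ≤ a x + b x) :
    ∫⁻ x, g x ^ 2 ∂μ ≤ 2 * (∫⁻ x, a x ^ 2 ∂μ + ∫⁻ x, b x ^ 2 ∂μ) := by
  calc ∫⁻ x, g x ^ 2 ∂μ ≤ ∫⁻ x, 2 * (a x ^ 2 + b x ^ 2) ∂μ :=
        lintegral_mono fun x =>
          (pow_le_pow_left₀ zero_le (h x) 2).trans (ENNReal.add_sq_le_two_mul _ _)
    _ = 2 * (∫⁻ x, a x ^ 2 ∂μ + ∫⁻ x, b x ^ 2 ∂μ) := by
        rw [lintegral_const_mul' _ _ ENNReal.ofNat_ne_top, lintegral_add_left' (ha.pow_const 2)]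

lemma sq_lintegral_le_measure_univ_mul {h : α → ℝ≥0∞} (hh : AEMeasurable h μ) :
    (∫⁻ x, h x ∂μ) ^ 2 ≤ μ univ * ∫⁻ x, h x ^ 2 ∂μ := by
  have := ENNReal.lintegral_mul_le_Lp_mul_Lq μ Real.HolderConjugate.two_two hh aemeasurable_const
    (g := 1)
  simp only [Pi.mul_apply, Pi.one_apply, mul_one, lintegral_const, ENNReal.rpow_two, one_pow,
    one_mul] at this
  calc (∫⁻ x, h x ∂μ) ^ 2 ≤ ((∫⁻ x, h x ^ 2 ∂μ) ^ (1 / 2 : ℝ) * μ univ ^ (1 / 2 : ℝ)) ^ 2 := by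
        gcongr
    _ = μ univ * ∫⁻ x, h x ^ 2 ∂μ := by
        rw [← ENNReal.mul_rpow_of_nonneg _ _ (by norm_num), ← ENNReal.rpow_two,
          ← ENNReal.rpow_mul]
        norm_num [mul_comm]

lemma sq_laverage_le_laverage_sq {h : α → ℝ≥0∞} (hh : AEMeasurable h μ) :
    (⨍⁻ x, h x ∂μ) ^ 2 ≤ ⨍⁻ x, h x ^ 2 ∂μ := by
  simp only [laverage_eq']
  refine (sq_lintegral_le_measure_univ_mul (hh.smul_measure _)).trans ?_
  calc _ ≤ 1 * ∫⁻ x, h x ^ 2 ∂(μ univ)⁻¹ • μ := by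
        gcongr
        exact ENNReal.inv_mul_le_one _
    _ = _ := one_mul _

lemma eLpNorm_two_sq {E : Type*} [NormedAddCommGroup E] (g : α → E) :
    eLpNorm g 2 μ ^ 2 = ∫⁻ x, ‖g x‖ₑ ^ 2 ∂μ := by
  simpa using eLpNorm_nnreal_pow_eq_lintegral (f := g) (μ := μ) (p := 2) two_ne_zero

lemma integral_sq_eq_toReal_lintegral {g : α → ℝ} (hg : AEStronglyMeasurable g μ) :
    ∫ x, g x ^ 2 ∂μ = (∫⁻ x, ‖g x‖ₑ ^ 2 ∂μ).toReal := by
  rw [integral_eq_lintegral_of_nonneg_ae (ae_of_all _ fun x => sq_nonneg _) (hg.pow 2)]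
  congr 1
  refine lintegral_congr fun x => ?_
  rw [Real.enorm_eq_ofReal_abs, ← ENNReal.ofReal_pow (abs_nonneg _), sq_abs]

lemma MeasureTheory.MemLp.integrableOn_of_measure_ne_top {E : Type*} [NormedAddCommGroup E]
    {f : α → E} {p : ℝ≥0∞} (hf : MemLp f p μ) (hp : 1 ≤ p) {s : Set α} (hs : μ s ≠ ∞) :
    IntegrableOn f s μ :=
  have : Fact (μ s < ∞) := ⟨hs.lt_top⟩
  (hf.restrict s).integrable hp

lemma abs_setAverage_sub_le {s : Set α} (hs₀ : μ s ≠ 0) (hs : μ s ≠ ∞) {f : α → ℝ}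
    (hf : IntegrableOn f s μ) (a : ℝ) :
    |(⨍ y in s, f y ∂μ) - a| ≤ ⨍ y in s, |a - f y| ∂μ := by
  have : NeZero (μ.restrict s) := ⟨by simpa [Measure.restrict_eq_zero] using hs₀⟩
  have : Fact (μ s < ∞) := ⟨hs.lt_top⟩
  have hJ := (convexOn_univ_dist a).map_average_le
    (continuous_id.dist continuous_const).continuousOn isClosed_univ
    (ae_of_all _ fun _ => mem_univ _) hf ((hf.sub (integrableOn_const hs)).abs)
  simpa only [Real.dist_eq, comp_apply, abs_sub_comm _ a] using hJ

lemma setAverage_le_mul_setAverage_of_subset {s t : Set α} {g : α → ℝ} (hg₀ : ∀ y, 0 ≤ g y)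
    (hg : IntegrableOn g t μ) (hst : s ⊆ t) (hs₀ : μ s ≠ 0) (ht : μ t ≠ ∞) {K : ℝ}
    (hK : 0 ≤ K) (hts : μ t ≤ ENNReal.ofReal K * μ s) :
    ⨍ y in s, g y ∂μ ≤ K * ⨍ y in t, g y ∂μ := by
  have hs : μ s ≠ ∞ := ne_top_of_le_ne_top ht (measure_mono hst)
  have hs_pos : 0 < μ.real s := ENNReal.toReal_pos hs₀ hs
  have ht_pos : 0 < μ.real t := hs_pos.trans_le (measureReal_mono hst ht)
  have hts' : μ.real t ≤ K * μ.real s := by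
    simpa [Measure.real, ENNReal.toReal_mul, ENNReal.toReal_ofReal hK] using
      ENNReal.toReal_mono (ENNReal.mul_ne_top ENNReal.ofReal_ne_top hs) hts
  rw [setAverage_eq, setAverage_eq, smul_eq_mul, smul_eq_mul]
  calc (μ.real s)⁻¹ * ∫ y in s, g y ∂μ ≤ (μ.real s)⁻¹ * ∫ y in t, g y ∂μ := by
        gcongr ?_ * ?_
        exact setIntegral_mono_set hg (ae_of_all _ hg₀) hst.eventuallyLE
    _ ≤ K * (μ.real t)⁻¹ * ∫ y in t, g y ∂μ := by
        gcongr ?_ * _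
        · exact integral_nonneg hg₀
        · rw [inv_le_iff_one_le_mul₀ hs_pos]
          calc 1 = (μ.real t)⁻¹ * μ.real t := (inv_mul_cancel₀ ht_pos.ne').symm
            _ ≤ (μ.real t)⁻¹ * (K * μ.real s) := by gcongr
            _ = K * (μ.real t)⁻¹ * μ.real s := by ring
    _ = K * ((μ.real t)⁻¹ * ∫ y in t, g y ∂μ) := by ring

end MeasureSpace

noncomputable def localOscillation {X : Type*} [PseudoMetricSpace X] [MeasurableSpace X]
    (μ : Measure X) (w : X → ℝ) (r : ℝ) (x : X) : ℝ :=
  ⨍ y in ball x r, |w x - w y| ∂μ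

section Oscillation

variable {X : Type*} [MetricSpace X] [MeasurableSpace X] {μ : Measure X}

lemma localOscillation_nonneg (μ : Measure X) (w : X → ℝ) (r : ℝ) (x : X) :
    0 ≤ localOscillation μ w r x :=
  integral_nonneg fun _ => abs_nonneg _

lemma localOscillation_congr_ae {w w' : X → ℝ} (h : w =ᵐ[μ] w') (r : ℝ) :
    localOscillation μ w r =ᵐ[μ] localOscillation μ w' r := by
  filter_upwards [h] with x hx
  refine average_congr ?_
  filter_upwards [ae_restrict_of_ae h] with y hy
  rw [hx, hy]

lemma ofReal_localOscillation_le (μ : Measure X) (w : X → ℝ) (r : ℝ) (x : X) :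
    ENNReal.ofReal (localOscillation μ w r x) ≤ ‖w x‖ₑ + ⨍⁻ y in ball x r, ‖w y‖ₑ ∂μ := by
  by_cases hint : IntegrableOn (fun y => |w x - w y|) (ball x r) μ
  · rw [localOscillation, ofReal_setAverage hint (ae_of_all _ fun _ => abs_nonneg _)]
    calc (∫⁻ y in ball x r, ENNReal.ofReal |w x - w y| ∂μ) / μ (ball x r)
        ≤ (∫⁻ y in ball x r, (‖w x‖ₑ + ‖w y‖ₑ) ∂μ) / μ (ball x r) := by
          gcongr with y
          rw [← Real.enorm_eq_ofReal_abs]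
          exact enorm_sub_le
      _ = ‖w x‖ₑ * (μ (ball x r) / μ (ball x r)) + ⨍⁻ y in ball x r, ‖w y‖ₑ ∂μ := by
          rw [lintegral_add_left measurable_const, setLIntegral_const, ENNReal.add_div,
            mul_div_assoc, setLAverage_eq]
      _ ≤ ‖w x‖ₑ + ⨍⁻ y in ball x r, ‖w y‖ₑ ∂μ := by
          gcongr
          exact mul_le_of_le_one_right' ENNReal.div_self_le_one
  · rw [localOscillation, setAverage_eq, integral_undef hint, smul_zero, ENNReal.ofReal_zero]
    exact zero_le

lemma localOscillation_le_of_forall_le {w : X → ℝ} {r c : ℝ} {x : X} (hc : 0 ≤ c)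
    (h : ∀ y ∈ ball x r, |w x - w y| ≤ c) : localOscillation μ w r x ≤ c := by
  rw [localOscillation, setAverage_eq, smul_eq_mul]
  rcases eq_or_ne (μ.real (ball x r)) 0 with h0 | h0
  · simpa [h0] using hc
  have hμ : μ (ball x r) < ∞ := lt_top_iff_ne_top.2 fun htop => h0 (by simp [Measure.real, htop])
  calc (μ.real (ball x r))⁻¹ * ∫ y in ball x r, |w x - w y| ∂μ
      ≤ (μ.real (ball x r))⁻¹ * (c * μ.real (ball x r)) := by
        gcongr
        refine (le_abs_self _).trans (norm_setIntegral_le_of_norm_le_const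
          (f := fun y => |w x - w y|) hμ fun y hy => ?_)
        simpa using h y hy
    _ = c := by field_simp

lemma localOscillation_add_le {v w : X → ℝ} {r : ℝ} {x : X} (hμ : μ (ball x r) ≠ ∞)
    (hv : IntegrableOn v (ball x r) μ) (hw : IntegrableOn w (ball x r) μ) :
    localOscillation μ (v + w) r x ≤ localOscillation μ v r x + localOscillation μ w r x := by
  have hosc {u : X → ℝ} (hu : IntegrableOn u (ball x r) μ) :
      IntegrableOn (fun y => |u x - u y|) (ball x r) μ :=
    ((integrableOn_const hμ).sub hu).abs
  simp only [localOscillation, setAverage_eq, smul_eq_mul, ← mul_add]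
  gcongr
  rw [← integral_add (hosc hv) (hosc hw)]
  refine integral_mono (hosc (hv.add hw)) ((hosc hv).add (hosc hw)) fun y => ?_
  simpa only [Pi.add_apply, add_sub_add_comm] using abs_add_le (v x - v y) (w x - w y)

lemma tendsto_localOscillation_of_continuousAt {u : X → ℝ} {x : X} (hu : ContinuousAt u x) :
    Tendsto (fun r => localOscillation μ u r x) (𝓝[>] 0) (𝓝 0) := by
  refine Metric.tendsto_nhds.2 fun η hη => ?_
  obtain ⟨δ, hδ, hux⟩ := Metric.continuousAt_iff.1 hu (η / 2) (half_pos hη)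
  filter_upwards [Ioo_mem_nhdsGT hδ] with r hr
  rw [Real.dist_eq, sub_zero, abs_of_nonneg (localOscillation_nonneg μ u r x)]
  refine (localOscillation_le_of_forall_le (half_pos hη).le fun y hy => ?_).trans_lt
    (half_lt_self hη)
  rw [abs_sub_comm]
  exact (hux ((mem_ball.1 hy).trans hr.2)).le

end Oscillation

section Measurability

variable {X : Type*} [MetricSpace X] [MeasurableSpace X] [BorelSpace X]
  [SecondCountableTopology X] {μ : Measure X} [SFinite μ]

lemma measurableSet_dist_lt (r : ℝ) : MeasurableSet {p : X × X | dist p.2 p.1 < r} :=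
  measurableSet_lt (measurable_snd.dist measurable_fst) measurable_const

lemma measurable_measure_ball (r : ℝ) : Measurable fun x => μ (ball x r) :=
  measurable_measure_prodMk_left (measurableSet_dist_lt r)

lemma measurable_localOscillation {w : X → ℝ} (hw : Measurable w) (r : ℝ) :
    Measurable (localOscillation μ w r) := by
  have hint := (((hw.comp measurable_fst).sub (hw.comp measurable_snd)).abs.indicator
    (measurableSet_dist_lt r)).stronglyMeasurable.integral_prod_right' (ν := μ)
  have hT : localOscillation μ w r = fun x =>
      (μ (ball x r)).toReal⁻¹ * ∫ y, {p : X × X | dist p.2 p.1 < r}.indicator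
        (fun p => |w p.1 - w p.2|) (x, y) ∂μ := by
    ext x
    rw [localOscillation, setAverage_eq, smul_eq_mul, ← integral_indicator measurableSet_ball]
    rfl
  rw [hT]
  exact (measurable_measure_ball r).ennreal_toReal.inv.mul hint.measurable

lemma aestronglyMeasurable_localOscillation {w : X → ℝ} (hw : AEStronglyMeasurable w μ)
    (r : ℝ) : AEStronglyMeasurable (localOscillation μ w r) μ :=
  (measurable_localOscillation hw.stronglyMeasurable_mk.measurable r).aestronglyMeasurable.congr
    (localOscillation_congr_ae hw.ae_eq_mk r).symm

end Measurability

section Doubling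

variable {X : Type*} [MetricSpace X] [MeasurableSpace X] {μ : Measure X} {CD : ℝ}

lemma measure_ball_two_pow_mul_le
    (hdouble : ∀ (x : X) (r : ℝ), 0 < r → μ (ball x (2 * r)) ≤ ENNReal.ofReal CD * μ (ball x r))
    (x : X) {r : ℝ} (hr : 0 < r) (n : ℕ) :
    μ (ball x (2 ^ n * r)) ≤ ENNReal.ofReal CD ^ n * μ (ball x r) := by
  induction n with
  | zero => simp
  | succ n ih =>
    calc μ (ball x (2 ^ (n + 1) * r)) = μ (ball x (2 * (2 ^ n * r))) := by ring_nf
      _ ≤ ENNReal.ofReal CD * μ (ball x (2 ^ n * r)) := hdouble x _ (by positivity)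
      _ ≤ ENNReal.ofReal CD * (ENNReal.ofReal CD ^ n * μ (ball x r)) := by gcongr
      _ = ENNReal.ofReal CD ^ (n + 1) * μ (ball x r) := by ring

lemma inv_measure_ball_le_of_mem_ball (hCD : 0 < CD)
    (hdouble : ∀ (x : X) (r : ℝ), 0 < r → μ (ball x (2 * r)) ≤ ENNReal.ofReal CD * μ (ball x r))
    {x y : X} {r : ℝ} (hr : 0 < r) (hxy : x ∈ ball y r) :
    (μ (ball x r))⁻¹ ≤ ENNReal.ofReal CD * (μ (ball y r))⁻¹ := by
  have hCD₀ : ENNReal.ofReal CD ≠ 0 := (ENNReal.ofReal_pos.2 hCD).ne'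
  have hyx : μ (ball y r) ≤ ENNReal.ofReal CD * μ (ball x r) := by
    refine (measure_mono (ball_subset_ball' ?_)).trans (hdouble x r hr)
    rw [mem_ball] at hxy
    linarith [dist_comm x y]
  calc (μ (ball x r))⁻¹
      = ENNReal.ofReal CD * (ENNReal.ofReal CD * μ (ball x r))⁻¹ := by
        rw [ENNReal.mul_inv (.inl hCD₀) (.inl ENNReal.ofReal_ne_top), ← mul_assoc,
          ENNReal.mul_inv_cancel hCD₀ ENNReal.ofReal_ne_top, one_mul]
    _ ≤ ENNReal.ofReal CD * (μ (ball y r))⁻¹ := by gcongr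

variable [BorelSpace X] [SecondCountableTopology X] [SFinite μ]

lemma lintegral_laverage_ball_le (hCD : 0 < CD)
    (hdouble : ∀ (x : X) (r : ℝ), 0 < r → μ (ball x (2 * r)) ≤ ENNReal.ofReal CD * μ (ball x r))
    {g : X → ℝ≥0∞} (hg : Measurable g) {r : ℝ} (hr : 0 < r) :
    ∫⁻ x, ⨍⁻ y in ball x r, g y ∂μ ∂μ ≤ ENNReal.ofReal CD * ∫⁻ y, g y ∂μ := by
  set F : X × X → ℝ≥0∞ :=
    {p : X × X | dist p.2 p.1 < r}.indicator fun p => (μ (ball p.1 r))⁻¹ * g p.2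
  have hF : Measurable F :=
    (((measurable_measure_ball r).comp measurable_fst).inv.mul (hg.comp measurable_snd)).indicator
      (measurableSet_dist_lt r)
  have hinner (y : X) : ∫⁻ x, F (x, y) ∂μ ≤ ENNReal.ofReal CD * g y := by
    have hF_y : (fun x => F (x, y)) = (ball y r).indicator fun x => (μ (ball x r))⁻¹ * g y := by
      ext x
      have hmem : (x, y) ∈ {p : X × X | dist p.2 p.1 < r} ↔ x ∈ ball y r := mem_ball'.symm
      simp only [F]
      by_cases hx : x ∈ ball y r
      · rw [indicator_of_mem hx, indicator_of_mem (hmem.2 hx)]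
      · rw [indicator_of_notMem hx, indicator_of_notMem (mt hmem.1 hx)]
    calc ∫⁻ x, F (x, y) ∂μ = ∫⁻ x in ball y r, (μ (ball x r))⁻¹ * g y ∂μ := by
          rw [hF_y, lintegral_indicator measurableSet_ball]
      _ ≤ ∫⁻ _ in ball y r, ENNReal.ofReal CD * (μ (ball y r))⁻¹ * g y ∂μ :=
          setLIntegral_mono (by fun_prop) fun x hx => by
            gcongr
            exact inv_measure_ball_le_of_mem_ball hCD hdouble hr hx
      _ = ENNReal.ofReal CD * g y * ((μ (ball y r))⁻¹ * μ (ball y r)) := by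
          rw [setLIntegral_const]
          ring
      _ ≤ ENNReal.ofReal CD * g y := mul_le_of_le_one_right' (ENNReal.inv_mul_le_one _)
  calc ∫⁻ x, ⨍⁻ y in ball x r, g y ∂μ ∂μ = ∫⁻ x, ∫⁻ y, F (x, y) ∂μ ∂μ := by
        refine lintegral_congr fun x => ?_
        rw [setLAverage_eq, ENNReal.div_eq_inv_mul, ← lintegral_const_mul _ hg,
          ← lintegral_indicator measurableSet_ball]
        rfl
    _ = ∫⁻ y, ∫⁻ x, F (x, y) ∂μ ∂μ := lintegral_lintegral_swap hF.aemeasurable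
    _ ≤ ∫⁻ y, ENNReal.ofReal CD * g y ∂μ := lintegral_mono hinner
    _ = ENNReal.ofReal CD * ∫⁻ y, g y ∂μ := lintegral_const_mul _ hg

lemma lintegral_sq_laverage_ball_le (hCD : 0 < CD)
    (hdouble : ∀ (x : X) (r : ℝ), 0 < r → μ (ball x (2 * r)) ≤ ENNReal.ofReal CD * μ (ball x r))
    {h : X → ℝ≥0∞} (hh : AEMeasurable h μ) {r : ℝ} (hr : 0 < r) :
    ∫⁻ x, (⨍⁻ y in ball x r, h y ∂μ) ^ 2 ∂μ ≤ ENNReal.ofReal CD * ∫⁻ y, h y ^ 2 ∂μ := by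
  have hmk (x : X) : ⨍⁻ y in ball x r, h y ∂μ = ⨍⁻ y in ball x r, hh.mk h y ∂μ :=
    laverage_congr (ae_restrict_of_ae hh.ae_eq_mk)
  calc ∫⁻ x, (⨍⁻ y in ball x r, h y ∂μ) ^ 2 ∂μ
      ≤ ∫⁻ x, ⨍⁻ y in ball x r, hh.mk h y ^ 2 ∂μ ∂μ := lintegral_mono fun x => by
        rw [hmk]
        exact sq_laverage_le_laverage_sq hh.measurable_mk.aemeasurable
    _ ≤ ENNReal.ofReal CD * ∫⁻ y, hh.mk h y ^ 2 ∂μ :=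
        lintegral_laverage_ball_le hCD hdouble (hh.measurable_mk.pow_const 2) hr
    _ = ENNReal.ofReal CD * ∫⁻ y, h y ^ 2 ∂μ := by
        congr 1
        exact lintegral_congr_ae (hh.ae_eq_mk.mono fun y hy => by simp only [hy])

lemma lintegral_sq_localOscillation_le (hCD : 0 < CD)
    (hdouble : ∀ (x : X) (r : ℝ), 0 < r → μ (ball x (2 * r)) ≤ ENNReal.ofReal CD * μ (ball x r))
    {w : X → ℝ} (hw : AEStronglyMeasurable w μ) {r : ℝ} (hr : 0 < r) :
    ∫⁻ x, ‖localOscillation μ w r x‖ₑ ^ 2 ∂μ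
      ≤ 2 * (1 + ENNReal.ofReal CD) * ∫⁻ x, ‖w x‖ₑ ^ 2 ∂μ := by
  calc ∫⁻ x, ‖localOscillation μ w r x‖ₑ ^ 2 ∂μ
      ≤ 2 * (∫⁻ x, ‖w x‖ₑ ^ 2 ∂μ + ∫⁻ x, (⨍⁻ y in ball x r, ‖w y‖ₑ ∂μ) ^ 2 ∂μ) :=
        lintegral_sq_le_of_le_add hw.enorm fun x => by
          rw [Real.enorm_of_nonneg (localOscillation_nonneg μ w r x)]
          exact ofReal_localOscillation_le μ w r x
    _ ≤ 2 * (∫⁻ x, ‖w x‖ₑ ^ 2 ∂μ + ENNReal.ofReal CD * ∫⁻ x, ‖w x‖ₑ ^ 2 ∂μ) := by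
        gcongr
        exact lintegral_sq_laverage_ball_le hCD hdouble hw.enorm hr
    _ = 2 * (1 + ENNReal.ofReal CD) * ∫⁻ x, ‖w x‖ₑ ^ 2 ∂μ := by ring

lemma memLp_two_localOscillation (hCD : 0 < CD)
    (hdouble : ∀ (x : X) (r : ℝ), 0 < r → μ (ball x (2 * r)) ≤ ENNReal.ofReal CD * μ (ball x r))
    {w : X → ℝ} (hw : MemLp w 2 μ) {r : ℝ} (hr : 0 < r) :
    MemLp (localOscillation μ w r) 2 μ := by
  refine ⟨aestronglyMeasurable_localOscillation hw.1 r, ?_⟩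
  have hsq : eLpNorm (localOscillation μ w r) 2 μ ^ 2 < ∞ := by
    rw [eLpNorm_two_sq]
    refine (lintegral_sq_localOscillation_le hCD hdouble hw.1 hr).trans_lt ?_
    rw [← eLpNorm_two_sq]
    exact ENNReal.mul_lt_top (by finiteness) (ENNReal.pow_lt_top hw.2)
  exact (ENNReal.pow_lt_top_iff.1 hsq).resolve_right two_ne_zero

end Doubling

noncomputable def ballCutoff {X : Type*} [PseudoMetricSpace X] (x₀ : X) (R : ℝ) (x : X) : ℝ :=
  max 0 (min 1 (R - dist x x₀))

section BallCutoff

variable {X : Type*} [PseudoMetricSpace X] (x₀ : X)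

lemma continuous_ballCutoff (R : ℝ) : Continuous (ballCutoff x₀ R) := by
  unfold ballCutoff
  fun_prop

lemma ballCutoff_mem_Icc (R : ℝ) (x : X) : ballCutoff x₀ R x ∈ Icc 0 1 :=
  ⟨le_max_left _ _, max_le zero_le_one (min_le_left _ _)⟩

lemma support_ballCutoff_subset (R : ℝ) : support (ballCutoff x₀ R) ⊆ ball x₀ R := by
  intro x hx
  by_contra hxR
  have : R ≤ dist x x₀ := not_lt.1 fun h => hxR (mem_ball.2 h)
  exact hx (max_eq_left ((min_le_right _ _).trans (by linarith)))

lemma ballCutoff_eq_one {R : ℝ} {x : X} (h : dist x x₀ + 1 ≤ R) : ballCutoff x₀ R x = 1 := by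
  rw [ballCutoff, min_eq_left (by linarith), max_eq_right zero_le_one]

lemma tendsto_lintegral_sq_sub_ballCutoff_mul [MeasurableSpace X] [OpensMeasurableSpace X]
    {μ : Measure X} {v : X → ℝ} (hv : MemLp v 2 μ) :
    Tendsto (fun n : ℕ => ∫⁻ x, ‖v x - ballCutoff x₀ n x * v x‖ₑ ^ 2 ∂μ) atTop (𝓝 0) := by
  have hmeas (n : ℕ) : AEMeasurable (fun x => ‖v x - ballCutoff x₀ n x * v x‖ₑ ^ 2) μ :=
    (hv.1.sub ((continuous_ballCutoff x₀ n).aestronglyMeasurable.mul hv.1)).enorm.pow_const 2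
  have hdom (n : ℕ) (x : X) : ‖v x - ballCutoff x₀ n x * v x‖ₑ ^ 2 ≤ ‖v x‖ₑ ^ 2 := by
    obtain ⟨h₀, h₁⟩ := ballCutoff_mem_Icc x₀ n x
    gcongr
    rw [enorm_le_iff_norm_le, show v x - ballCutoff x₀ n x * v x = (1 - ballCutoff x₀ n x) * v x
      by ring, norm_mul, Real.norm_of_nonneg (by linarith)]
    exact mul_le_of_le_one_left (norm_nonneg _) (by linarith)
  have hv_fin : ∫⁻ x, ‖v x‖ₑ ^ 2 ∂μ ≠ ∞ := by
    rw [← eLpNorm_two_sq]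
    exact (ENNReal.pow_lt_top hv.2).ne
  have hlim : ∀ᵐ x ∂μ, Tendsto (fun n : ℕ => ‖v x - ballCutoff x₀ n x * v x‖ₑ ^ 2) atTop (𝓝 0) :=
    ae_of_all _ fun x => tendsto_const_nhds.congr' <| by
      filter_upwards [eventually_ge_atTop ⌈dist x x₀ + 1⌉₊] with n hn
      rw [ballCutoff_eq_one x₀ ((Nat.le_ceil _).trans (by exact_mod_cast hn))]
      simp
  simpa using tendsto_lintegral_filter_of_dominated_convergence' _ (.of_forall hmeas)
    (.of_forall fun n => ae_of_all _ (hdom n)) hv_fin hlim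

end BallCutoff

section Convergence

variable {X : Type*} [MetricSpace X] [MeasurableSpace X] [BorelSpace X]
  [SecondCountableTopology X] {μ : Measure X} [IsLocallyFiniteMeasure μ] {CD : ℝ}

lemma tendsto_lintegral_sq_localOscillation_of_continuous
    (hfin : ∀ (x : X) (r : ℝ), 0 < r → μ (ball x r) < ⊤) {u : X → ℝ} (hu : Continuous u)
    {M : ℝ} (hM : ∀ x, |u x| ≤ M) {x₀ : X} {R : ℝ} (hR : support u ⊆ ball x₀ R) :
    Tendsto (fun r => ∫⁻ x, ‖localOscillation μ u r x‖ₑ ^ 2 ∂μ) (𝓝[>] 0) (𝓝 0) := by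
  have hM₀ : 0 ≤ 2 * M := by linarith [(abs_nonneg _).trans (hM x₀)]
  have hu₀ {y : X} (hy : R ≤ dist y x₀) : u y = 0 :=
    notMem_support.1 fun h => (mem_ball.1 (hR h)).not_ge hy
  set B := ball x₀ (max R 0 + 1)
  have hbound : ∀ᶠ r in 𝓝[>] (0 : ℝ), ∀ᵐ x ∂μ,
      ‖localOscillation μ u r x‖ₑ ^ 2 ≤ B.indicator (fun _ => ENNReal.ofReal (2 * M) ^ 2) x := by
    filter_upwards [Ioo_mem_nhdsGT one_pos] with r hr
    refine ae_of_all _ fun x => ?_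
    rw [Real.enorm_of_nonneg (localOscillation_nonneg μ u r x)]
    by_cases hx : x ∈ B
    · rw [indicator_of_mem hx]
      gcongr
      exact localOscillation_le_of_forall_le hM₀ fun y _ =>
        (abs_sub _ _).trans (by linarith [hM x, hM y])
    · have hxR : max R 0 + 1 ≤ dist x x₀ := not_lt.1 hx
      have hzero : localOscillation μ u r x = 0 := by
        refine le_antisymm (localOscillation_le_of_forall_le le_rfl fun y hy => ?_)
          (localOscillation_nonneg μ u r x)
        have hyR : R ≤ dist y x₀ := by
          linarith [dist_triangle x y x₀, mem_ball'.1 hy, hr.2, le_max_left R 0]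
        rw [hu₀ (by linarith [le_max_left R 0]), hu₀ hyR, sub_self, abs_zero]
      simp [hzero]
  have hB : ∫⁻ x, B.indicator (fun _ => ENNReal.ofReal (2 * M) ^ 2) x ∂μ ≠ ∞ := by
    rw [lintegral_indicator_const measurableSet_ball]
    exact ENNReal.mul_ne_top (by finiteness) (hfin x₀ _ (by positivity)).ne
  have hlim : ∀ᵐ x ∂μ,
      Tendsto (fun r => ‖localOscillation μ u r x‖ₑ ^ 2) (𝓝[>] 0) (𝓝 0) :=
    ae_of_all _ fun x => by
      simpa [comp_def] using ((ENNReal.continuous_pow 2).tendsto _).comp ((continuous_enorm.tendsto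
        0).comp (tendsto_localOscillation_of_continuousAt hu.continuousAt))
  simpa using tendsto_lintegral_filter_of_dominated_convergence _
    (.of_forall fun r => (measurable_localOscillation hu.measurable r).enorm.pow_const 2)
    hbound hB hlim

lemma MeasureTheory.MemLp.exists_continuous_support_subset_ball_lintegral_sq_sub_le {f : X → ℝ}
    (hf : MemLp f 2 μ) (x₀ : X) {δ : ℝ≥0∞} (hδ : δ ≠ 0) :
    ∃ (u : X → ℝ) (M R : ℝ), Continuous u ∧ (∀ x, |u x| ≤ M) ∧ support u ⊆ ball x₀ R ∧
      ∫⁻ x, ‖f x - u x‖ₑ ^ 2 ∂μ ≤ δ := by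
  have hδ₄ : 0 < δ / 4 := ENNReal.div_pos hδ (by norm_num)
  obtain ⟨v, hfv, hv⟩ := hf.exists_boundedContinuous_eLpNorm_sub_le ENNReal.ofNat_ne_top
    (lt_min one_pos hδ₄).ne'
  obtain ⟨n, hn⟩ :=
    (ENNReal.tendsto_nhds_zero.1 (tendsto_lintegral_sq_sub_ballCutoff_mul x₀ hv) _ hδ₄).exists
  refine ⟨fun x => ballCutoff x₀ n x * v x, ‖v‖, n,
    (continuous_ballCutoff x₀ n).mul v.continuous, fun x => ?_,
    (support_mul_subset_left _ _).trans (support_ballCutoff_subset x₀ n), ?_⟩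
  · obtain ⟨h₀, h₁⟩ := ballCutoff_mem_Icc x₀ n x
    rw [abs_mul, abs_of_nonneg h₀]
    exact (mul_le_of_le_one_left (abs_nonneg _) h₁).trans (v.norm_coe_le_norm x)
  calc ∫⁻ x, ‖f x - ballCutoff x₀ n x * v x‖ₑ ^ 2 ∂μ
      ≤ 2 * (∫⁻ x, ‖f x - v x‖ₑ ^ 2 ∂μ + ∫⁻ x, ‖v x - ballCutoff x₀ n x * v x‖ₑ ^ 2 ∂μ) :=
        lintegral_sq_le_of_le_add (hf.1.sub v.continuous.aestronglyMeasurable).enorm fun x => by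
          rw [← sub_add_sub_cancel (f x) (v x)]
          exact enorm_add_le _ _
    _ ≤ 2 * (δ / 4 + δ / 4) := by
        gcongr
        calc ∫⁻ x, ‖f x - v x‖ₑ ^ 2 ∂μ = eLpNorm (f - ⇑v) 2 μ ^ 2 := (eLpNorm_two_sq _).symm
          _ ≤ min 1 (δ / 4) ^ 2 := by gcongr
          _ ≤ min 1 (δ / 4) := pow_le_of_le_one zero_le (min_le_left _ _) two_ne_zero
          _ ≤ δ / 4 := min_le_right _ _
    _ = δ := ENNReal.two_mul_add_quarters δ

lemma tendsto_lintegral_sq_localOscillation (hCD : 0 < CD)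
    (hdouble : ∀ (x : X) (r : ℝ), 0 < r → μ (ball x (2 * r)) ≤ ENNReal.ofReal CD * μ (ball x r))
    (hfin : ∀ (x : X) (r : ℝ), 0 < r → μ (ball x r) < ⊤) {f : X → ℝ} (hf : MemLp f 2 μ) :
    Tendsto (fun r => ∫⁻ x, ‖localOscillation μ f r x‖ₑ ^ 2 ∂μ) (𝓝[>] 0) (𝓝 0) := by
  rcases isEmpty_or_nonempty X with hX | ⟨⟨x₀⟩⟩
  · simp [Measure.eq_zero_of_isEmpty μ]
  set K := 2 * (1 + ENNReal.ofReal CD)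
  have hK : K ≠ ∞ := by finiteness
  refine ENNReal.tendsto_nhds_zero.2 fun η hη => ?_
  have hη₄ : 0 < η / 4 := ENNReal.div_pos hη.ne' (by norm_num)
  obtain ⟨u, M, R, hu, hM, hR, hfu⟩ :=
    hf.exists_continuous_support_subset_ball_lintegral_sq_sub_le x₀ (ENNReal.div_pos hη₄.ne' hK).ne'
  have hfu_meas : AEStronglyMeasurable (f - u) μ := hf.1.sub hu.aestronglyMeasurable
  filter_upwards [ENNReal.tendsto_nhds_zero.1
    (tendsto_lintegral_sq_localOscillation_of_continuous hfin hu hM hR) _ hη₄,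
    self_mem_nhdsWithin] with r hu_r (hr : 0 < r)
  have hsub (x : X) : ‖localOscillation μ f r x‖ₑ
      ≤ ‖localOscillation μ (f - u) r x‖ₑ + ‖localOscillation μ u r x‖ₑ := by
    simp only [Real.enorm_of_nonneg (localOscillation_nonneg _ _ _ _)]
    rw [← ENNReal.ofReal_add (localOscillation_nonneg _ _ _ _) (localOscillation_nonneg _ _ _ _)]
    gcongr
    have hint_u : IntegrableOn u (ball x r) μ :=
      Measure.integrableOn_of_bounded (hfin x r hr).ne hu.aestronglyMeasurable
        (ae_of_all _ fun y => hM y)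
    have hint_f := hf.integrableOn_of_measure_ne_top one_le_two (hfin x r hr).ne
    simpa using localOscillation_add_le (hfin x r hr).ne (hint_f.sub hint_u) hint_u
  calc ∫⁻ x, ‖localOscillation μ f r x‖ₑ ^ 2 ∂μ
      ≤ 2 * (∫⁻ x, ‖localOscillation μ (f - u) r x‖ₑ ^ 2 ∂μ
          + ∫⁻ x, ‖localOscillation μ u r x‖ₑ ^ 2 ∂μ) :=
        lintegral_sq_le_of_le_add (aestronglyMeasurable_localOscillation hfu_meas r).enorm hsub
    _ ≤ 2 * (K * ∫⁻ x, ‖f x - u x‖ₑ ^ 2 ∂μ + ∫⁻ x, ‖localOscillation μ u r x‖ₑ ^ 2 ∂μ) := by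
        gcongr
        exact lintegral_sq_localOscillation_le hCD hdouble hfu_meas hr
    _ ≤ 2 * (η / 4 + η / 4) := by
        gcongr
        exact (mul_le_mul_right hfu K).trans ENNReal.mul_div_le
    _ = η := ENNReal.two_mul_add_quarters η

lemma tendsto_integral_sq_localOscillation (hCD : 0 < CD)
    (hdouble : ∀ (x : X) (r : ℝ), 0 < r → μ (ball x (2 * r)) ≤ ENNReal.ofReal CD * μ (ball x r))
    (hfin : ∀ (x : X) (r : ℝ), 0 < r → μ (ball x r) < ⊤) {f : X → ℝ} (hf : MemLp f 2 μ) :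
    Tendsto (fun r => ∫ x, localOscillation μ f r x ^ 2 ∂μ) (𝓝[>] 0) (𝓝 0) := by
  simp only [integral_sq_eq_toReal_lintegral (aestronglyMeasurable_localOscillation hf.1 _)]
  simpa [comp_def] using (ENNReal.tendsto_toReal ENNReal.zero_ne_top).comp
    (tendsto_lintegral_sq_localOscillation hCD hdouble hfin hf)

end Convergence

noncomputable def discreteConvolution {X ι : Type*} [PseudoMetricSpace X] [MeasurableSpace X]
    (μ : Measure X) (c : ι → X) (φ : ι → X → ℝ) (ε : ℝ) (f : X → ℝ) (x : X) : ℝ :=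
  ∑' i, (⨍ y in ball (c i) ε, f y ∂μ) * φ i x

section DiscreteConvolution

variable {X ι : Type*} [MetricSpace X] [MeasurableSpace X] {μ : Measure X} {CD : ℝ}
  {c : ι → X} {φ : ι → X → ℝ} {ε : ℝ} {f : X → ℝ}

lemma abs_discreteConvolution_sub_le (hCD : 0 < CD)
    (hpos : ∀ (x : X) (r : ℝ), 0 < r → 0 < μ (ball x r))
    (hfin : ∀ (x : X) (r : ℝ), 0 < r → μ (ball x r) < ⊤)
    (hdouble : ∀ (x : X) (r : ℝ), 0 < r → μ (ball x (2 * r)) ≤ ENNReal.ofReal CD * μ (ball x r))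
    (hε : 0 < ε) (hf : ∀ (x : X) (r : ℝ), 0 < r → IntegrableOn f (ball x r) μ) {x : X}
    (hφ₀ : ∀ i, 0 ≤ φ i x) (hsum : ∑' i, φ i x = 1)
    (hsupp : ∀ i, x ∉ ball (c i) (2 * ε) → φ i x = 0) :
    |discreteConvolution μ c φ ε f x - f x| ≤ CD ^ 3 * localOscillation μ f (6 * ε) x := by
  refine abs_tsum_mul_sub_le hφ₀ hsum fun i hi => ?_
  have hxi : dist x (c i) < 2 * ε := mem_ball.1 (not_imp_comm.1 (hsupp i) hi)
  have h6ε : 0 < 6 * ε := by positivity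
  have hball : μ (ball x (6 * ε)) ≤ ENNReal.ofReal (CD ^ 3) * μ (ball (c i) ε) := by
    calc μ (ball x (6 * ε)) ≤ μ (ball (c i) (2 ^ 3 * ε)) :=
          measure_mono (ball_subset_ball' (by linarith))
      _ ≤ ENNReal.ofReal CD ^ 3 * μ (ball (c i) ε) := measure_ball_two_pow_mul_le hdouble _ hε 3
      _ = ENNReal.ofReal (CD ^ 3) * μ (ball (c i) ε) := by rw [ENNReal.ofReal_pow hCD.le]
  calc |(⨍ y in ball (c i) ε, f y ∂μ) - f x| ≤ ⨍ y in ball (c i) ε, |f x - f y| ∂μ :=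
        abs_setAverage_sub_le (hpos _ _ hε).ne' (hfin _ _ hε).ne (hf _ _ hε) (f x)
    _ ≤ CD ^ 3 * localOscillation μ f (6 * ε) x :=
        setAverage_le_mul_setAverage_of_subset (fun _ => abs_nonneg _)
          ((integrableOn_const (hfin x _ h6ε).ne).sub (hf x _ h6ε)).abs
          (ball_subset_ball' (by rw [dist_comm]; linarith)) (hpos _ _ hε).ne' (hfin x _ h6ε).ne
          (by positivity) hball

lemma integral_sq_discreteConvolution_sub_le (hCD : 0 < CD)
    (hpos : ∀ (x : X) (r : ℝ), 0 < r → 0 < μ (ball x r))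
    (hfin : ∀ (x : X) (r : ℝ), 0 < r → μ (ball x r) < ⊤)
    (hdouble : ∀ (x : X) (r : ℝ), 0 < r → μ (ball x (2 * r)) ≤ ENNReal.ofReal CD * μ (ball x r))
    (hε : 0 < ε) (hf : ∀ (x : X) (r : ℝ), 0 < r → IntegrableOn f (ball x r) μ)
    (hosc : Integrable (fun x => localOscillation μ f (6 * ε) x ^ 2) μ)
    (hφ₀ : ∀ i x, 0 ≤ φ i x) (hsum : ∀ x, ∑' i, φ i x = 1)
    (hsupp : ∀ i x, x ∉ ball (c i) (2 * ε) → φ i x = 0) :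
    ∫ x, (discreteConvolution μ c φ ε f x - f x) ^ 2 ∂μ
      ≤ CD ^ 6 * ∫ x, localOscillation μ f (6 * ε) x ^ 2 ∂μ := by
  rw [← integral_const_mul]
  refine integral_mono_of_nonneg (ae_of_all _ fun _ => sq_nonneg _) (hosc.const_mul _)
    (ae_of_all _ fun x => ?_)
  calc (discreteConvolution μ c φ ε f x - f x) ^ 2
      = |discreteConvolution μ c φ ε f x - f x| ^ 2 := (sq_abs _).symm
    _ ≤ (CD ^ 3 * localOscillation μ f (6 * ε) x) ^ 2 := by
        gcongr
        exact abs_discreteConvolution_sub_le hCD hpos hfin hdouble hε hf (hφ₀ · x) (hsum x)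
          (hsupp · x)
    _ = CD ^ 6 * localOscillation μ f (6 * ε) x ^ 2 := by ring

end DiscreteConvolution

theorem stmt3_general {X : Type*} [MetricSpace X] [MeasurableSpace X] [BorelSpace X]
    (μ : Measure X) (CD : ℝ) (hCD : 0 < CD)
    (hpos : ∀ (x : X) (r : ℝ), 0 < r → 0 < μ (ball x r))
    (hfin : ∀ (x : X) (r : ℝ), 0 < r → μ (ball x r) < ⊤)
    (hdouble : ∀ (x : X) (r : ℝ), 0 < r →
      μ (ball x (2 * r)) ≤ ENNReal.ofReal CD * μ (ball x r))
    (ι : ℝ → Type) (hcnt : ∀ ε, Countable (ι ε))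
    (c : ∀ ε, ι ε → X) (φ : ∀ ε, ι ε → X → ℝ)
    (hcover : ∀ ε : ℝ, 0 < ε → (⋃ i, ball (c ε i) ε) = Set.univ)
    (hnonneg : ∀ ε i x, 0 ≤ φ ε i x)
    (hsum : ∀ ε : ℝ, 0 < ε → ∀ x, ∑' i, φ ε i x = 1)
    (hsupp : ∀ ε : ℝ, 0 < ε → ∀ i x, x ∉ ball (c ε i) (2 * ε) → φ ε i x = 0)
    (f : X → ℝ) (hf : MemLp f 2 μ) :
    ∃ C : ℝ, 0 < C ∧
      (∀ ε : ℝ, 0 < ε →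
        ∫ x, ((∑' i, (⨍ y in ball (c ε i) ε, f y ∂μ) * φ ε i x) - f x) ^ 2 ∂μ ≤
          C * ∫ x, (⨍ y in ball x (6 * ε), |f x - f y| ∂μ) ^ 2 ∂μ) ∧
      Tendsto
        (fun ε => ∫ x, ((∑' i, (⨍ y in ball (c ε i) ε, f y ∂μ) * φ ε i x) - f x) ^ 2 ∂μ)
        (𝓝[>] (0 : ℝ)) (𝓝 0) := by
  have : SecondCountableTopology X := secondCountable_of_almost_dense_set fun ε hε =>
    ⟨range (c ε), @countable_range _ _ (hcnt ε) _, fun x => by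
      obtain ⟨i, hi⟩ := mem_iUnion.1 (hcover ε hε ▸ mem_univ x)
      exact ⟨c ε i, mem_range_self i, (mem_ball.1 hi).le⟩⟩
  have : IsLocallyFiniteMeasure μ :=
    ⟨fun x => ⟨ball x 1, ball_mem_nhds x one_pos, hfin x 1 one_pos⟩⟩
  have hf_loc (x : X) (r : ℝ) (hr : 0 < r) : IntegrableOn f (ball x r) μ :=
    hf.integrableOn_of_measure_ne_top one_le_two (hfin x r hr).ne
  have hL2 (ε : ℝ) (hε : 0 < ε) :
      ∫ x, (discreteConvolution μ (c ε) (φ ε) ε f x - f x) ^ 2 ∂μ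
        ≤ CD ^ 6 * ∫ x, localOscillation μ f (6 * ε) x ^ 2 ∂μ :=
    integral_sq_discreteConvolution_sub_le hCD hpos hfin hdouble hε hf_loc
      (memLp_two_localOscillation hCD hdouble hf (by positivity)).integrable_sq
      (hnonneg ε) (hsum ε hε) (hsupp ε hε)
  refine ⟨CD ^ 6, by positivity, hL2, ?_⟩
  have h6 : Tendsto (fun ε : ℝ => 6 * ε) (𝓝[>] 0) (𝓝[>] 0) :=
    tendsto_iff_comap.2 (comap_mulLeft_nhdsGT_zero (by norm_num)).ge
  have hosc := ((tendsto_integral_sq_localOscillation hCD hdouble hfin hf).comp h6).const_mul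
    (CD ^ 6)
  rw [mul_zero] at hosc
  exact squeeze_zero' (.of_forall fun ε => integral_nonneg fun _ => sq_nonneg _)
    (eventually_mem_nhdsWithin.mono hL2) hosc

/-- L² estimate for the discrete convolutions `f_ε` and
convergence `f_ε → f` in `L²(X,μ)` as `ε → 0⁺`. -/
theorem stmt3 {X : Type*} [MetricSpace X] [MeasurableSpace X] [BorelSpace X]
    (μ : Measure X) (CD : ℝ) (hCD : 0 < CD)
    (hpos : ∀ (x : X) (r : ℝ), 0 < r → 0 < μ (ball x r))
    (hfin : ∀ (x : X) (r : ℝ), 0 < r → μ (ball x r) < ⊤)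
    (hdouble : ∀ (x : X) (r : ℝ), 0 < r →
      μ (ball x (2 * r)) ≤ ENNReal.ofReal CD * μ (ball x r))
    (N : ℕ) (CL : ℝ) (hCL : 0 < CL)
    (ι : ℝ → Type) (hcnt : ∀ ε, Countable (ι ε))
    (c : ∀ ε, ι ε → X) (φ : ∀ ε, ι ε → X → ℝ)
    (hcover : ∀ ε : ℝ, 0 < ε → (⋃ i, ball (c ε i) ε) = Set.univ)
    (hoverlap : ∀ ε : ℝ, 0 < ε → ∀ x : X,
      Set.ncard {i | x ∈ ball (c ε i) (5 * ε)} ≤ N)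
    (hnonneg : ∀ ε i x, 0 ≤ φ ε i x) (hle : ∀ ε i x, φ ε i x ≤ 1)
    (hsum : ∀ ε : ℝ, 0 < ε → ∀ x, ∑' i, φ ε i x = 1)
    (hsupp : ∀ ε : ℝ, 0 < ε → ∀ i x, x ∉ ball (c ε i) (2 * ε) → φ ε i x = 0)
    (hlip : ∀ ε : ℝ, 0 < ε → ∀ i, LipschitzWith (Real.toNNReal (CL / ε)) (φ ε i))
    (f : X → ℝ) (hf : MemLp f 2 μ) :
    ∃ C : ℝ, 0 < C ∧
      (∀ ε : ℝ, 0 < ε →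
        ∫ x, ((∑' i, (⨍ y in ball (c ε i) ε, f y ∂μ) * φ ε i x) - f x) ^ 2 ∂μ ≤
          C * ∫ x, (⨍ y in ball x (6 * ε), |f x - f y| ∂μ) ^ 2 ∂μ) ∧
      Tendsto
        (fun ε => ∫ x, ((∑' i, (⨍ y in ball (c ε i) ε, f y ∂μ) * φ ε i x) - f x) ^ 2 ∂μ)
        (𝓝[>] (0 : ℝ)) (𝓝 0) :=
  stmt3_general μ CD hCD hpos hfin hdouble ι hcnt c φ hcover hnonneg hsum hsupp f hf
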